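/- arXiv:1212.2096 — 4 statements merged into one kernel-verified Lean document; each statement's English description precedes it below -/
import Mathlib

section
/- Let ψ₁ and ψ₂ be functions defined on [1,∞) that are positive, continuous, and strictly decreasing to zero (lim_{t→∞}ψᵢ(t)=0), and suppose that φ(t)=ψ₂(t)/ψ₁(t) is monotone nondecreasing. Then η(ψ₁;t) ≤ η(ψ₂;t) for all t ≥ 1. -/
/-!
Monotonicity of `ψ₂ / ψ₁` means that over any interval `ψ₁` loses at least the same fraction
of its value as `ψ₂`. So at `η(ψ₂;t)`, where `ψ₂` has halved, `ψ₁` has at least halved, and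
since `ψ₁` is strictly decreasing it reached `ψ₁ t / 2` no later.
-/

open Real Filter

lemma apply_le_mul_apply_of_monotoneOn_div {f g : ℝ → ℝ} {s : Set ℝ}
    (hf : ∀ x ∈ s, 0 < f x) (h : MonotoneOn (fun x => g x / f x) s)
    {a b c : ℝ} (ha : a ∈ s) (hb : b ∈ s) (hab : a ≤ b) (hga : 0 < g a)
    (hgb : g b = c * g a) : f b ≤ c * f a := by
  have hratio : g a / f a ≤ g b / f b := h ha hb hab
  rw [hgb, div_le_div_iff₀ (hf a ha) (hf b hb)] at hratio
  nlinarith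

theorem statement5_general (ψ₁ ψ₂ η₁ η₂ : ℝ → ℝ)
    (hpos₁ : ∀ t ≥ (1:ℝ), 0 < ψ₁ t) (hpos₂ : ∀ t ≥ (1:ℝ), 0 < ψ₂ t)
    (hd₁ : StrictAntiOn ψ₁ (Set.Ici 1))
    (hratio : MonotoneOn (fun t => ψ₂ t / ψ₁ t) (Set.Ici 1))
    (hη₁ : ∀ t ≥ (1:ℝ), t ≤ η₁ t ∧ ψ₁ (η₁ t) = ψ₁ t / 2)
    (hη₂ : ∀ t ≥ (1:ℝ), t ≤ η₂ t ∧ ψ₂ (η₂ t) = ψ₂ t / 2) :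
    ∀ t ≥ (1:ℝ), η₁ t ≤ η₂ t := by
  intro t ht
  obtain ⟨hle₁, hhalf₁⟩ := hη₁ t ht
  obtain ⟨hle₂, hhalf₂⟩ := hη₂ t ht
  have hψ₁_halved : ψ₁ (η₂ t) ≤ 2⁻¹ * ψ₁ t :=
    apply_le_mul_apply_of_monotoneOn_div hpos₁ hratio ht (ht.trans hle₂) hle₂ (hpos₂ t ht)
      (by rw [hhalf₂]; ring)
  by_contra! hlt
  have : ψ₁ (η₁ t) < ψ₁ (η₂ t) := hd₁ (ht.trans hle₂) (ht.trans hle₁) hlt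
  linarith

/-- If `ψ₁, ψ₂ : [1,∞) → (0,∞)` are positive, continuous, strictly decreasing to zero,
`φ = ψ₂/ψ₁` is nondecreasing, and `η i` satisfies `ηᵢ t ≥ t` with `ψᵢ(ηᵢ t) = ψᵢ(t)/2`
(i.e. `ηᵢ t = ψᵢ⁻¹(ψᵢ t / 2)`), then `η₁ t ≤ η₂ t` for all `t ≥ 1`. -/
theorem statement5 (ψ₁ ψ₂ η₁ η₂ : ℝ → ℝ)
    (hpos₁ : ∀ t ≥ (1:ℝ), 0 < ψ₁ t) (hpos₂ : ∀ t ≥ (1:ℝ), 0 < ψ₂ t)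
    (hc₁ : ContinuousOn ψ₁ (Set.Ici 1)) (hc₂ : ContinuousOn ψ₂ (Set.Ici 1))
    (hd₁ : StrictAntiOn ψ₁ (Set.Ici 1)) (hd₂ : StrictAntiOn ψ₂ (Set.Ici 1))
    (hlim₁ : Tendsto ψ₁ atTop (nhds 0)) (hlim₂ : Tendsto ψ₂ atTop (nhds 0))
    (hratio : MonotoneOn (fun t => ψ₂ t / ψ₁ t) (Set.Ici 1))
    (hη₁ : ∀ t ≥ (1:ℝ), t ≤ η₁ t ∧ ψ₁ (η₁ t) = ψ₁ t / 2)
    (hη₂ : ∀ t ≥ (1:ℝ), t ≤ η₂ t ∧ ψ₂ (η₂ t) = ψ₂ t / 2) :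
    ∀ t ≥ (1:ℝ), η₁ t ≤ η₂ t :=
  statement5_general ψ₁ ψ₂ η₁ η₂ hpos₁ hpos₂ hd₁ hratio hη₁ hη₂
end

section
/- There exists an absolute constant K>0 such that for every ψ∈𝔐_∞^+, every β∈ℝ, every modulus of continuity ω, and every n∈ℕ with μ(ψ;n)>2, one has I_n(ψ,β,ω)_C ≤ (2/π)·ψ(n)·e_n(ω) + K·ψ(n+1)·(1/n + 1/(μ(ψ;n)−2))·ω(1/n). -/
open Real MeasureTheory Filter

noncomputable section

/-- `ω` is a modulus of continuity: continuous, nondecreasing, subadditive on `[0,∞)`,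
nonnegative, and `ω 0 = 0`. -/
def IsModulus (ω : ℝ → ℝ) : Prop :=
  ContinuousOn ω (Set.Ici 0) ∧ MonotoneOn ω (Set.Ici 0) ∧
  (∀ s t : ℝ, 0 ≤ s → 0 ≤ t → ω (s + t) ≤ ω s + ω t) ∧ ω 0 = 0 ∧
  ∀ t : ℝ, 0 ≤ t → 0 ≤ ω t

/-- `ψ` belongs to `𝔐_∞^+`, where `η t = ψ⁻¹(ψ t / 2)` (i.e. `η t ≥ t` and
`ψ (η t) = ψ t / 2`) and `μ t = t / (η t − t)` is nondecreasing and tends to `∞`. -/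
def IsMInfPlus (ψ η : ℝ → ℝ) : Prop :=
  (∀ t ≥ (1:ℝ), 0 < ψ t) ∧ ContinuousOn ψ (Set.Ici 1) ∧
  ConvexOn ℝ (Set.Ici 1) ψ ∧ Tendsto ψ atTop (nhds 0) ∧
  (∀ t ≥ (1:ℝ), t < η t ∧ ψ (η t) = ψ t / 2) ∧
  MonotoneOn (fun t => t / (η t - t)) (Set.Ici 1) ∧
  Tendsto (fun t => t / (η t - t)) atTop atTop


/-- The kernel `Ψ_n(t) = ψ(n)/2 + ∑_{k=1}^∞ ψ(n+k) cos kt`. -/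
def PsiN (ψ : ℝ → ℝ) (n : ℕ) (t : ℝ) : ℝ :=
  ψ n / 2 + ∑' k : ℕ, ψ ((n : ℝ) + k + 1) * Real.cos ((k + 1) * t)

/-- The points `x_k = (1+β)π/(2n) + kπ/n`. -/
def xPt (β : ℝ) (n : ℕ) (k : ℤ) : ℝ := (1 + β) * π / (2 * n) + k * π / n

/-- The index `k` with `t ∈ [t_k, t_{k+1})`, `t_k = βπ/(2n) + kπ/n`. -/
def stepIdx (β : ℝ) (n : ℕ) (t : ℝ) : ℤ := ⌊(t - β * π / (2 * n)) * n / π⌋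

/-- The step function `Ψ̄_n`, equal to `Ψ_n(x_k)` on `[t_k, t_{k+1})`. -/
def PsiBar (ψ : ℝ → ℝ) (β : ℝ) (n : ℕ) (t : ℝ) : ℝ :=
  PsiN ψ n (xPt β n (stepIdx β n t))

/-- `H_{ω_C}`: continuous `2π`-periodic functions whose modulus of continuity is
dominated by `ω`. -/
def HClassC (ω : ℝ → ℝ) : Set (ℝ → ℝ) :=
  {φ | Continuous φ ∧ Function.Periodic φ (2 * π) ∧
    ∀ t : ℝ, 0 ≤ t → ∀ x h : ℝ, |h| ≤ t → |φ (x + h) - φ x| ≤ ω t}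

/-- `I_n(ψ,β,ω)_C = sup_{φ ∈ H_{ω_C}} (2/π)‖∫_0^{2π} φ(·−t)cos(nt−βπ/2)Ψ̄_n(t)dt‖_C`. -/
def In (ψ : ℝ → ℝ) (β : ℝ) (ω : ℝ → ℝ) (n : ℕ) : ℝ :=
  sSup {e | ∃ φ ∈ HClassC ω, e = (2 / π) *
    ⨆ x : ℝ, |∫ t in (0:ℝ)..(2 * π),
      φ (x - t) * Real.cos (n * t - β * π / 2) * PsiBar ψ β n t|}

/-- `e_n(ω) = ∫_0^{π/2} ω(2t/n) sin t dt`. -/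
def eN (n : ℕ) (ω : ℝ → ℝ) : ℝ := ∫ t in (0:ℝ)..(π / 2), ω (2 * t / n) * Real.sin t


/-!
After a shift of the variable, `[0, 2π)` splits into the `2n` cells on which `Ψ̄_n` is constant.
On each cell, folding `∫ φ(x - t) cos(nt - βπ/2) dt` about the midpoint of the cell leaves an
integral of differences of `φ` at distance `π/n - 2s`, which is at most `e_n(ω)/n`. Hence the
quantity is bounded by `(e_n(ω)/n) ∑_k Ψ_n(x_k)`. Here `Ψ_n ≥ 0` because `ψ` is convex (two Abel
summations against nonnegative Fejér sums), and summing over the `2n` equally spaced points `x_k`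
kills every harmonic whose index is not divisible by `2n`, leaving `n ψ(n)` plus the tail
`∑_{k ≥ 1} ψ(n + k)`. Convexity and the monotonicity of `μ` give
`(μ(n)/2) ψ(t) ≤ (t + μ(n)) (ψ(t) - ψ(t + 1))` for `t ≥ n`, which telescopes to
`∑_{k ≥ 1} ψ(n + k) ≤ 2 (n + μ(n)) ψ(n + 1) / (μ(n) - 2)`; finally `e_n(ω) ≤ 4 ω(1/n)`.
-/

open Finset

theorem sum_range_le_of_mul_le_mul_sub {a : ℕ → ℝ} {c w : ℝ} (hc : 1 < c) (hw : 1 ≤ w)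
    (ha : ∀ k, 0 ≤ a k) (h : ∀ k : ℕ, c * a k ≤ (w + k) * (a k - a (k + 1))) (K : ℕ) :
    ∑ k ∈ range K, a k ≤ (w - 1) * a 0 / (c - 1) := by
  have telescoped :
      ∀ K : ℕ, (c - 1) * ∑ k ∈ range K, a k + (w + K - 1) * a K ≤ (w - 1) * a 0 := by
    intro K
    induction K with
    | zero => simp
    | succ K ih =>
      rw [sum_range_succ]
      push_cast
      linarith [h K]
  rw [le_div_iff₀ (by linarith), mul_comm]
  nlinarith [telescoped K, ha K, K.cast_nonneg (α := ℝ)]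

theorem ConvexOn.antitoneOn_of_tendsto {f : ℝ → ℝ} {a L : ℝ} (hf : ConvexOn ℝ (Set.Ici a) f)
    (hlim : Tendsto f atTop (nhds L)) (hL : ∀ t ≥ a, L < f t) : AntitoneOn f (Set.Ici a) := by
  intro s hs t ht hst
  by_contra! hlt
  obtain ⟨u, hu, htu⟩ :=
    ((hlim.eventually_lt_const (hL t ht)).and (eventually_ge_atTop t)).exists
  have := hf.le_on_segment hs (le_trans ht htu : a ≤ u)
    (by rw [segment_eq_Icc (hst.trans htu)]; exact ⟨hst, htu⟩)
  exact (max_lt hlt hu).not_ge this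

namespace IsMInfPlus

variable {ψ η : ℝ → ℝ}

theorem antitoneOn (hM : IsMInfPlus ψ η) : AntitoneOn ψ (Set.Ici 1) :=
  hM.2.2.1.antitoneOn_of_tendsto hM.2.2.2.1 hM.1

theorem mul_le_mul_sub_succ (hM : IsMInfPlus ψ η) {n t : ℝ} (hn : 1 ≤ n) (hnt : n ≤ t) :
    n / (η n - n) / 2 * ψ t ≤ (t + n / (η n - n)) * (ψ t - ψ (t + 1)) := by
  have hanti := hM.antitoneOn
  obtain ⟨hpos, -, hconv, -, hη, hmono, -⟩ := hM
  have ht : 1 ≤ t := hn.trans hnt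
  obtain ⟨hηt, hψη⟩ := hη t ht
  obtain ⟨hηn, -⟩ := hη n hn
  set μ := n / (η n - n)
  have hμ : 0 ≤ μ := div_nonneg (by linarith) (by linarith)
  have hμt : μ ≤ t / (η t - t) := hmono hn ht hnt
  have hψt := hpos t ht
  rcases le_total (η t) (t + 1) with hle | hge
  · have := hanti (Set.mem_Ici.2 (by linarith)) (Set.mem_Ici.2 (by linarith)) hle
    nlinarith
  · -- the chord of `ψ` over `[t, t + 1]` is steeper than the one over `[t, η t]`
    have hslope := hconv.secant_mono (a := t) ht (Set.mem_Ici.2 (by linarith))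
      (Set.mem_Ici.2 (by linarith)) (by linarith) (by linarith) hge
    rw [hψη, add_sub_cancel_left, div_one] at hslope
    have hh : 0 < η t - t := by linarith
    rw [le_div_iff₀ hh] at hμt hslope
    nlinarith

theorem sum_range_le (hM : IsMInfPlus ψ η) {n : ℝ} (hn : 1 ≤ n) (hμ : 2 < n / (η n - n))
    (K : ℕ) : ∑ k ∈ range K, ψ (n + k + 1) ≤
      (n + n / (η n - n)) * ψ (n + 1) / (n / (η n - n) / 2 - 1) := by
  have h := sum_range_le_of_mul_le_mul_sub (a := fun k : ℕ => ψ (n + k + 1))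
    (c := n / (η n - n) / 2) (w := n + 1 + n / (η n - n)) (by linarith) (by linarith)
    (fun k => (hM.1 _ (by linarith [k.cast_nonneg (α := ℝ)])).le)
    (fun k => by
      have := hM.mul_le_mul_sub_succ (t := n + k + 1) hn (by linarith [k.cast_nonneg (α := ℝ)])
      push_cast
      convert this using 2 <;> ring_nf) K
  convert h using 2
  simp only [Nat.cast_zero, add_zero]
  ring_nf

end IsMInfPlus

def dirichletSum (N : ℕ) (t : ℝ) : ℝ := 1 / 2 + ∑ k ∈ range N, cos ((k + 1) * t)

def fejerSum (N : ℕ) (t : ℝ) : ℝ := ∑ j ∈ range N, dirichletSum j t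

theorem two_sin_mul_dirichletSum (N : ℕ) (t : ℝ) :
    2 * sin (t / 2) * dirichletSum N t = sin ((N + 1 / 2) * t) := by
  induction N with
  | zero => simp [dirichletSum]; ring_nf
  | succ N ih =>
    rw [dirichletSum, sum_range_succ, ← add_assoc, ← dirichletSum]
    have h1 : ((N + 1 : ℕ) + 1 / 2 : ℝ) * t = (N + 1 / 2) * t + t / 2 + t / 2 := by
      push_cast; ring
    have h2 : ((N : ℝ) + 1) * t = (N + 1 / 2) * t + t / 2 := by ring
    rw [h1, h2, sin_add, sin_add, cos_add]
    linear_combination ih - sin ((N + 1 / 2) * t) * sin_sq_add_cos_sq (t / 2)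

theorem four_sin_sq_mul_fejerSum (N : ℕ) (t : ℝ) :
    4 * sin (t / 2) ^ 2 * fejerSum N t = 1 - cos (N * t) := by
  induction N with
  | zero => simp [fejerSum]
  | succ N ih =>
    rw [fejerSum, sum_range_succ, ← fejerSum]
    have h1 : ((N + 1 : ℕ) : ℝ) * t = (N + 1 / 2) * t + t / 2 := by push_cast; ring
    have h2 : (N : ℝ) * t = (N + 1 / 2) * t - t / 2 := by ring
    rw [h1, cos_add]
    rw [h2, cos_sub] at ih
    linear_combination ih + 2 * sin (t / 2) * two_sin_mul_dirichletSum N t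

theorem fejerSum_nonneg {t : ℝ} (hs : sin (t / 2) ≠ 0) (N : ℕ) : 0 ≤ fejerSum N t := by
  have h := four_sin_sq_mul_fejerSum N t
  have : 0 < 4 * sin (t / 2) ^ 2 := by positivity
  nlinarith [cos_le_one (N * t)]

theorem abs_dirichletSum_le {t : ℝ} (hs : sin (t / 2) ≠ 0) (N : ℕ) :
    |dirichletSum N t| ≤ (2 * |sin (t / 2)|)⁻¹ := by
  have hs' : 0 < 2 * |sin (t / 2)| := by positivity
  rw [← one_div, le_div_iff₀ hs']
  calc |dirichletSum N t| * (2 * |sin (t / 2)|) = |2 * sin (t / 2) * dirichletSum N t| := by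
        rw [abs_mul, abs_mul, abs_two]; ring
    _ ≤ 1 := by rw [two_sin_mul_dirichletSum]; exact abs_sin_le_one _

theorem cosine_partial_sum_eq (a : ℕ → ℝ) (t : ℝ) (M : ℕ) :
    a 0 / 2 + ∑ k ∈ range M, a (k + 1) * cos ((k + 1) * t) =
      ∑ k ∈ range M, (a k - 2 * a (k + 1) + a (k + 2)) * fejerSum (k + 1) t
        + (a M - a (M + 1)) * fejerSum M t + a M * dirichletSum M t := by
  induction M with
  | zero => simp [fejerSum, dirichletSum]; ring
  | succ M ih =>
    have hF : fejerSum (M + 1) t = fejerSum M t + dirichletSum M t := sum_range_succ _ _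
    have hD : dirichletSum (M + 1) t = dirichletSum M t + cos ((M + 1) * t) := by
      simp only [dirichletSum, sum_range_succ]; ring
    rw [sum_range_succ, sum_range_succ, ← add_assoc, ih, hD, hF]
    ring

theorem cosine_series_nonneg {a : ℕ → ℝ} (hconv : ∀ k, a (k + 1) - a (k + 2) ≤ a k - a (k + 1))
    (hlim : Tendsto a atTop (nhds 0)) (t : ℝ) :
    0 ≤ a 0 / 2 + ∑' k : ℕ, a (k + 1) * cos ((k + 1) * t) := by
  have hanti : Antitone a := by
    have hdiff : Monotone fun k => a (k + 1) - a k :=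
      monotone_nat_of_le_succ fun k => by linarith [hconv k]
    have hdiff_lim : Tendsto (fun k => a (k + 1) - a k) atTop (nhds 0) := by
      simpa using (hlim.comp (tendsto_add_atTop_nat 1)).sub hlim
    exact antitone_nat_of_succ_le fun k => by linarith [hdiff.ge_of_tendsto hdiff_lim k]
  have hpos : ∀ k, 0 ≤ a k := hanti.le_of_tendsto hlim
  -- a non-summable series has `tsum` equal to `0`
  by_cases hsum : Summable fun k : ℕ => a (k + 1) * cos ((k + 1) * t)
  swap
  · rw [tsum_eq_zero_of_not_summable hsum]; linarith [hpos 0]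
  by_cases hs : sin (t / 2) = 0
  · obtain ⟨m, hm⟩ := sin_eq_zero_iff.1 hs
    have hcos : ∀ k : ℕ, cos ((k + 1) * t) = 1 := fun k => by
      rw [show ((k : ℝ) + 1) * t = ((k + 1 : ℕ) * m : ℤ) * (2 * π) by
        push_cast; linear_combination (-2 * ((k : ℝ) + 1)) * hm]
      exact cos_int_mul_two_pi _
    have : 0 ≤ ∑' k : ℕ, a (k + 1) * cos ((k + 1) * t) :=
      tsum_nonneg fun k => by rw [hcos k, mul_one]; exact hpos (k + 1)
    linarith [hpos 0]
  have hpartial := (hsum.hasSum.tendsto_sum_nat).const_add (a 0 / 2)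
  have hbound : Tendsto (fun M => -(a M * (2 * |sin (t / 2)|)⁻¹)) atTop (nhds 0) := by
    simpa using (hlim.mul_const (2 * |sin (t / 2)|)⁻¹).neg
  refine le_of_tendsto_of_tendsto' hbound hpartial fun M => ?_
  rw [cosine_partial_sum_eq]
  have hsecond : 0 ≤ ∑ k ∈ range M, (a k - 2 * a (k + 1) + a (k + 2)) * fejerSum (k + 1) t :=
    sum_nonneg fun k _ => mul_nonneg (by linarith [hconv k]) (fejerSum_nonneg hs _)
  have hfirst : 0 ≤ (a M - a (M + 1)) * fejerSum M t :=
    mul_nonneg (by linarith [hanti M.le_succ]) (fejerSum_nonneg hs _)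
  have hlast := neg_le_of_abs_le (abs_dirichletSum_le hs M)
  nlinarith [hpos M]

theorem IsMInfPlus.psiN_nonneg {ψ η : ℝ → ℝ} (hM : IsMInfPlus ψ η) {n : ℕ} (hn : 1 ≤ n)
    (t : ℝ) : 0 ≤ PsiN ψ n t := by
  obtain ⟨-, -, hconv, hlim, -⟩ := hM
  have hdom : ∀ k : ℕ, (n + k : ℝ) ∈ Set.Ici 1 := fun k =>
    Set.mem_Ici.2 (le_add_of_le_of_nonneg (Nat.one_le_cast.2 hn) k.cast_nonneg)
  have hmid : ∀ k : ℕ,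
      ψ (n + (k + 1 : ℕ)) - ψ (n + (k + 2 : ℕ)) ≤ ψ (n + k) - ψ (n + (k + 1 : ℕ)) := by
    intro k
    have := hconv.2 (hdom k) (hdom (k + 2)) (by norm_num : (0 : ℝ) ≤ 1 / 2)
      (by norm_num : (0 : ℝ) ≤ 1 / 2) (by norm_num)
    simp only [smul_eq_mul] at this
    push_cast at this ⊢
    rw [show 1 / 2 * (n + k : ℝ) + 1 / 2 * (n + (k + 2)) = n + (k + 1) by ring] at this
    linarith
  have hlim' : Tendsto (fun k : ℕ => ψ (n + k)) atTop (nhds 0) :=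
    hlim.comp (tendsto_atTop_add_const_left _ _ tendsto_natCast_atTop_atTop)
  simpa [PsiN, add_assoc] using cosine_series_nonneg hmid hlim' t

theorem sum_range_cos_add_mul_eq_zero {θ δ : ℝ} {N : ℕ} (hδ : ∀ ℓ : ℤ, δ ≠ ℓ * (2 * π))
    (hNδ : ∃ ℓ : ℤ, N * δ = ℓ * (2 * π)) : ∑ k ∈ range N, cos (θ + k * δ) = 0 := by
  set z := Complex.exp (δ * Complex.I)
  have hz : z ≠ 1 := fun h => by
    obtain ⟨ℓ, hℓ⟩ := Complex.exp_eq_one_iff.1 h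
    exact hδ ℓ (by simpa using congrArg Complex.im hℓ)
  have hzN : z ^ N = 1 := by
    obtain ⟨ℓ, hℓ⟩ := hNδ
    rw [← Complex.exp_nat_mul, ← mul_assoc, ← Complex.ofReal_natCast, ← Complex.ofReal_mul, hℓ]
    push_cast
    rw [show (ℓ * (2 * π) * Complex.I : ℂ) = ℓ * (2 * π * Complex.I) by ring]
    exact Complex.exp_int_mul_two_pi_mul_I ℓ
  have hterm : ∀ k : ℕ, cos (θ + k * δ) = (Complex.exp (θ * Complex.I) * z ^ k).re := fun k => by
    rw [← Complex.exp_ofReal_mul_I_re, ← Complex.exp_nat_mul, ← Complex.exp_add]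
    push_cast
    ring_nf
  simp only [hterm, ← Complex.re_sum, ← mul_sum, geom_sum_eq hz, hzN, sub_self, zero_div,
    mul_zero, Complex.zero_re]

theorem sum_cos_mul_xPt_eq_zero {n : ℕ} (hn : 1 ≤ n) (β : ℝ) {m : ℕ} (hm : ¬ 2 * n ∣ m + 1) :
    ∑ k ∈ range (2 * n), cos ((m + 1) * xPt β n k) = 0 := by
  have hn0 : (n : ℝ) ≠ 0 := by positivity
  have h := sum_range_cos_add_mul_eq_zero (θ := (m + 1) * ((1 + β) * π / (2 * n)))
    (δ := (m + 1) * π / n) (N := 2 * n) (fun ℓ hℓ => hm ?_) ⟨m + 1, ?_⟩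
  · rw [← h]
    refine sum_congr rfl fun k _ => ?_
    simp only [xPt, Int.cast_natCast]
    ring_nf
  · have : ((m + 1 : ℕ) : ℤ) = ((2 * n : ℕ) : ℤ) * ℓ := by
      field_simp at hℓ
      push_cast
      exact_mod_cast (by nlinarith [pi_pos] : ((m : ℝ) + 1) = 2 * n * ℓ)
    exact Int.natCast_dvd_natCast.1 ⟨ℓ, this⟩
  · push_cast
    field_simp

theorem sum_range_ite_dvd_le {f : ℕ → ℝ} (hf : Antitone f) {q : ℕ} (hq : 0 < q) (M : ℕ) :
    ∑ m ∈ range (q * M), (if q ∣ m + 1 then q * f m else 0) ≤ ∑ m ∈ range (q * M), f m := by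
  induction M with
  | zero => simp
  | succ M ih =>
    rw [Nat.mul_succ, sum_range_add, sum_range_add]
    refine add_le_add ih ?_
    have hblock : ∑ i ∈ range q, (if q ∣ q * M + i + 1 then q * f (q * M + i) else 0)
        = q * f (q * M + (q - 1)) := by
      rw [sum_eq_single (q - 1)]
      · rw [if_pos ⟨M + 1, by rw [Nat.mul_succ]; omega⟩]
      · intro i hi hne
        rw [if_neg]
        intro h
        have hdvd : q ∣ i + 1 :=
          (Nat.dvd_add_right (dvd_mul_right q M)).1 (by rwa [add_assoc] at h)
        have := Nat.le_of_dvd (by omega) hdvd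
        have := mem_range.1 hi
        omega
      · simp [hq]
    rw [hblock]
    calc (q : ℝ) * f (q * M + (q - 1)) = ∑ i ∈ range q, f (q * M + (q - 1)) := by simp
      _ ≤ ∑ i ∈ range q, f (q * M + i) :=
        sum_le_sum fun i hi => hf (by have := mem_range.1 hi; omega)

theorem IsMInfPlus.sum_psiN_xPt_le {ψ η : ℝ → ℝ} (hM : IsMInfPlus ψ η) {n : ℕ} (hn : 1 ≤ n)
    (β : ℝ) {B : ℝ} (hB : ∀ K : ℕ, ∑ k ∈ range K, ψ (n + k + 1) ≤ B) :
    ∑ k ∈ range (2 * n), PsiN ψ n (xPt β n k) ≤ n * ψ n + B := by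
  set f : ℕ → ℝ := fun m => ψ (n + m + 1)
  have harg : ∀ m : ℕ, (n + m + 1 : ℝ) ∈ Set.Ici 1 := fun m =>
    Set.mem_Ici.2 (le_add_of_nonneg_left (by positivity))
  have hf0 : ∀ m, 0 ≤ f m := fun m => (hM.1 _ (harg m)).le
  have hfanti : Antitone f := antitone_nat_of_succ_le fun m =>
    hM.antitoneOn (harg m) (harg (m + 1)) (by push_cast; linarith)
  have hfsum : Summable f := summable_of_sum_range_le hf0 hB
  set C : ℕ → ℝ := fun m => ∑ k ∈ range (2 * n), cos ((m + 1) * xPt β n k)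
  have hC : ∀ m, |C m| ≤ ((2 * n : ℕ) : ℝ) := fun m =>
    (abs_sum_le_sum_abs _ _).trans (by
      simpa using sum_le_sum (s := range (2 * n)) fun k _ => abs_cos_le_one ((m + 1) * xPt β n k))
  have hfC : Summable fun m => f m * C m := by
    refine (hfsum.mul_left ((2 * n : ℕ) : ℝ)).of_norm_bounded fun m => ?_
    rw [Real.norm_eq_abs, abs_mul, abs_of_nonneg (hf0 m), mul_comm]
    exact mul_le_mul_of_nonneg_right (hC m) (hf0 m)
  -- only the harmonics `m + 1` divisible by `2n` survive the sum over the points `x_k`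
  set g : ℕ → ℝ := fun m => if 2 * n ∣ m + 1 then ((2 * n : ℕ) : ℝ) * f m else 0
  have hg0 : ∀ m, 0 ≤ g m := fun m => by
    simp only [g]; split_ifs <;> [exact mul_nonneg (by positivity) (hf0 m); exact le_rfl]
  have hfCg : ∀ m, f m * C m ≤ g m := fun m => by
    simp only [g]
    split_ifs with hdvd
    · rw [mul_comm]; exact mul_le_mul_of_nonneg_right (le_of_abs_le (hC m)) (hf0 m)
    · simp [C, sum_cos_mul_xPt_eq_zero hn β hdvd]
  have hg : Summable g := (hfsum.mul_left ((2 * n : ℕ) : ℝ)).of_nonneg_of_le hg0 fun m => by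
    simp only [g]; split_ifs <;> [exact le_rfl; exact mul_nonneg (by positivity) (hf0 m)]
  have hgB : ∑' m, g m ≤ B := Real.tsum_le_of_sum_range_le hg0 fun M =>
    calc ∑ m ∈ range M, g m ≤ ∑ m ∈ range (2 * n * M), g m :=
          sum_le_sum_of_subset_of_nonneg
            (range_subset_range.2 (Nat.le_mul_of_pos_left M (by omega))) fun m _ _ => hg0 m
      _ ≤ ∑ m ∈ range (2 * n * M), f m := sum_range_ite_dvd_le hfanti (by omega) M
      _ ≤ B := hB _
  have hswap : ∑ k ∈ range (2 * n), PsiN ψ n (xPt β n k) = n * ψ n + ∑' m, f m * C m := by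
    simp only [PsiN, sum_add_distrib, sum_const, card_range, nsmul_eq_mul, C, mul_sum]
    rw [← Summable.tsum_finsetSum fun k _ => ?_]
    · push_cast; ring
    · exact hfsum.of_norm_bounded fun m => by
        rw [Real.norm_eq_abs, abs_mul, abs_of_nonneg (hf0 m)]
        exact mul_le_of_le_one_right (hf0 m) (abs_cos_le_one _)
  rw [hswap]
  linarith [hfC.tsum_le_tsum hfCg hg]

theorem integral_mul_cos_eq_integral_sub_mul_sin {g : ℝ → ℝ} (hg : Continuous g) :
    ∫ u in (0 : ℝ)..π, g u * cos u =
      ∫ v in (0 : ℝ)..π / 2, (g (π / 2 - v) - g (π / 2 + v)) * sin v := by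
  have hint : ∀ a b : ℝ, IntervalIntegrable (fun u => g u * cos u) volume a b := fun a b =>
    (hg.mul continuous_cos).intervalIntegrable a b
  have hleft :
      ∫ u in (0 : ℝ)..π / 2, g u * cos u = ∫ v in (0 : ℝ)..π / 2, g (π / 2 - v) * sin v := by
    simpa [cos_pi_div_two_sub] using (intervalIntegral.integral_comp_sub_left
      (fun u => g u * cos u) (π / 2) (a := 0) (b := π / 2)).symm
  have hright :
      ∫ u in π / 2..π, g u * cos u = -∫ v in (0 : ℝ)..π / 2, g (π / 2 + v) * sin v := by
    have := (intervalIntegral.integral_comp_add_right (fun u => g u * cos u) (π / 2)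
      (a := 0) (b := π / 2)).symm
    simp only [zero_add, add_halves, cos_add_pi_div_two, mul_neg, intervalIntegral.integral_neg]
      at this
    simp only [this, add_comm]
  rw [← intervalIntegral.integral_add_adjacent_intervals (hint 0 (π / 2)) (hint (π / 2) π), hleft,
    hright, ← sub_eq_add_neg, ← intervalIntegral.integral_sub]
  · simp only [sub_mul]
  all_goals exact Continuous.intervalIntegrable (by fun_prop) _ _

theorem abs_integral_mul_cos_le {g w : ℝ → ℝ} (hg : Continuous g)
    (hw : ContinuousOn w (Set.Ici 0)) (hgw : ∀ u v, |g u - g v| ≤ w |u - v|) :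
    |∫ u in (0 : ℝ)..π, g u * cos u| ≤ ∫ v in (0 : ℝ)..π / 2, w (2 * v) * sin v := by
  have hπ : (0 : ℝ) ≤ π / 2 := by positivity
  rw [integral_mul_cos_eq_integral_sub_mul_sin hg]
  refine (intervalIntegral.abs_integral_le_integral_abs hπ).trans
    (intervalIntegral.integral_mono_on hπ (Continuous.intervalIntegrable (by fun_prop) _ _) ?_ ?_)
  · refine ContinuousOn.intervalIntegrable ?_
    rw [Set.uIcc_of_le hπ]
    exact (hw.comp (continuous_const_mul 2).continuousOn fun v hv =>
      show (0 : ℝ) ≤ 2 * v by linarith [hv.1]).mul continuous_sin.continuousOn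
  · intro v hv
    have hsin : 0 ≤ sin v := sin_nonneg_of_nonneg_of_le_pi hv.1 (by linarith [hv.2, pi_pos])
    rw [abs_mul, abs_of_nonneg hsin]
    refine mul_le_mul_of_nonneg_right ((hgw _ _).trans_eq ?_) hsin
    rw [show π / 2 - v - (π / 2 + v) = -(2 * v) by ring, abs_neg,
      abs_of_nonneg (by linarith [hv.1])]

theorem abs_integral_mul_cos_cell_le {φ ω : ℝ → ℝ} (hφ : φ ∈ HClassC ω)
    (hω : ContinuousOn ω (Set.Ici 0)) {n : ℕ} (hn : 1 ≤ n) (x β : ℝ) (k : ℕ) :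
    |∫ t in β * π / (2 * n) + k * π / n..β * π / (2 * n) + (k + 1) * π / n,
      φ (x - t) * cos (n * t - β * π / 2)| ≤ eN n ω / n := by
  obtain ⟨hφc, -, hφω⟩ := hφ
  have hn0 : (0 : ℝ) < n := by positivity
  set a := β * π / (2 * n) + k * π / n
  have hsub := intervalIntegral.integral_comp_add_div
    (fun t => φ (x - t) * cos (n * t - β * π / 2)) (a := 0) (b := π) hn0.ne' a
  rw [zero_div, add_zero, show a + π / n = β * π / (2 * n) + (k + 1) * π / n by ring] at hsub
  have hcell : ∫ t in a..β * π / (2 * n) + (k + 1) * π / n, φ (x - t) * cos (n * t - β * π / 2)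
      = (-1) ^ k * (∫ u in (0 : ℝ)..π, φ (x - a - u / n) * cos u) / n := by
    rw [eq_div_iff hn0.ne', mul_comm, ← smul_eq_mul, ← hsub,
      ← intervalIntegral.integral_const_mul]
    refine intervalIntegral.integral_congr fun u _ => ?_
    have : n * (a + u / n) - β * π / 2 = u + k * π := by simp only [a]; field_simp; ring
    simp only [this, cos_add_nat_mul_pi, sub_sub]
    ring
  rw [hcell, abs_div, abs_mul, abs_pow, abs_neg, abs_one, one_pow, one_mul, abs_of_pos hn0]
  refine div_le_div_of_nonneg_right (abs_integral_mul_cos_le (w := fun s => ω (s / n))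
    (by fun_prop) (hω.comp (continuousOn_id.div_const _) fun s hs => div_nonneg hs hn0.le)
    fun u v => ?_) hn0.le
  have := hφω (|u - v| / n) (by positivity) (x - a - v / n) ((v - u) / n)
    (by rw [abs_div, abs_of_pos hn0, abs_sub_comm])
  rwa [show x - a - v / n + (v - u) / n = x - a - u / n by ring] at this

theorem psiN_periodic (ψ : ℝ → ℝ) (n : ℕ) : Function.Periodic (PsiN ψ n) (2 * π) := fun t => by
  simp only [PsiN, mul_add]
  congr 2 with k
  rw [show ((k : ℝ) + 1) * (2 * π) = ((k + 1 : ℕ) : ℤ) * (2 * π) by push_cast; ring,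
    cos_add_int_mul_two_pi]

theorem psiBar_periodic (ψ : ℝ → ℝ) (β : ℝ) {n : ℕ} (hn : 1 ≤ n) :
    Function.Periodic (PsiBar ψ β n) (2 * π) := fun t => by
  have hn0 : (n : ℝ) ≠ 0 := by positivity
  have hidx : stepIdx β n (t + 2 * π) = stepIdx β n t + 2 * n := by
    rw [stepIdx, stepIdx, ← Int.floor_add_intCast]
    congr 1
    push_cast
    field_simp
    ring
  have hx : xPt β n (stepIdx β n t + 2 * n) = xPt β n (stepIdx β n t) + 2 * π := by
    simp only [xPt]
    push_cast
    field_simp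
    ring
  rw [PsiBar, PsiBar, hidx, hx, psiN_periodic]

theorem psiBar_eq_of_mem_Ico (ψ : ℝ → ℝ) {β : ℝ} {n : ℕ} (hn : 1 ≤ n) {k : ℤ} {t : ℝ}
    (ht : t ∈ Set.Ico (β * π / (2 * n) + k * π / n) (β * π / (2 * n) + (k + 1) * π / n)) :
    PsiBar ψ β n t = PsiN ψ n (xPt β n k) := by
  have hn0 : (0 : ℝ) < n := by positivity
  suffices stepIdx β n t = k by rw [PsiBar, this]
  rw [stepIdx, Int.floor_eq_iff, le_div_iff₀ pi_pos, div_lt_iff₀ pi_pos]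
  obtain ⟨h1, h2⟩ := ht
  constructor
  · have := mul_le_mul_of_nonneg_right (sub_le_sub_right h1 (β * π / (2 * n))) hn0.le
    field_simp at this ⊢
    linarith
  · have := mul_lt_mul_of_pos_right (sub_lt_sub_right h2 (β * π / (2 * n))) hn0
    field_simp at this ⊢
    linarith

theorem abs_integral_le_sum_psiN_mul {ψ φ ω : ℝ → ℝ} (hφ : φ ∈ HClassC ω)
    (hω : ContinuousOn ω (Set.Ici 0)) {n : ℕ} (hn : 1 ≤ n) (hψ : ∀ t, 0 ≤ PsiN ψ n t)
    (β x : ℝ) :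
    |∫ t in (0 : ℝ)..2 * π, φ (x - t) * cos (n * t - β * π / 2) * PsiBar ψ β n t| ≤
      (∑ k ∈ range (2 * n), PsiN ψ n (xPt β n k)) * (eN n ω / n) := by
  set F := fun t => φ (x - t) * cos (n * t - β * π / 2) * PsiBar ψ β n t
  set G := fun t => φ (x - t) * cos (n * t - β * π / 2)
  have hG : Continuous G := by have := hφ.1; fun_prop
  set c : ℕ → ℝ := fun k => β * π / (2 * n) + k * π / n
  have hc : ∀ k : ℕ, c (k + 1) = β * π / (2 * n) + ((k : ℤ) + 1) * π / n := fun k => by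
    simp only [c]; push_cast; ring
  have hF : Function.Periodic F (2 * π) := by
    have hcos : Function.Periodic (fun t => cos (n * t - β * π / 2)) (2 * π) := fun t => by
      dsimp only
      rw [show n * (t + 2 * π) - β * π / 2 = n * t - β * π / 2 + (n : ℤ) * (2 * π) by
        push_cast; ring, cos_add_int_mul_two_pi]
    have hφ' : Function.Periodic (fun t => φ (x - t)) (2 * π) := fun t => by
      simpa [sub_add_eq_sub_sub] using (hφ.2.1 (x - t - 2 * π)).symm
    exact (hφ'.mul hcos).mul (psiBar_periodic ψ β hn)
  have hcell : ∀ k : ℕ,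
      Set.EqOn F (fun t => G t * PsiN ψ n (xPt β n k)) (Set.uIoo (c k) (c (k + 1))) := by
    intro k t ht
    rw [Set.uIoo_of_le (by simp only [c]; push_cast; gcongr; linarith)] at ht
    have := psiBar_eq_of_mem_Ico ψ hn (k := k) (t := t) ⟨ht.1.le, by rw [← hc]; exact ht.2⟩
    simp only [F, G, this]
  have hint : ∀ k < 2 * n, IntervalIntegrable F volume (c k) (c (k + 1)) := fun k _ =>
    ((hG.mul continuous_const).intervalIntegrable _ _).congr_uIoo (hcell k).symm
  have hsplit : ∫ t in (0 : ℝ)..2 * π, F t = ∑ k ∈ range (2 * n), ∫ t in c k..c (k + 1), F t := by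
    have hend : c (2 * n) = c 0 + 2 * π := by simp only [c]; push_cast; field_simp; ring
    rw [intervalIntegral.sum_integral_adjacent_intervals hint, hend,
      ← hF.intervalIntegral_add_eq 0 (c 0), zero_add]
  rw [hsplit, sum_mul]
  refine (abs_sum_le_sum_abs _ _).trans (sum_le_sum fun k _ => ?_)
  rw [intervalIntegral.integral_congr_uIoo (hcell k), intervalIntegral.integral_mul_const,
    abs_mul, abs_of_nonneg (hψ _), mul_comm]
  refine mul_le_mul_of_nonneg_left ?_ (hψ _)
  simpa [c] using abs_integral_mul_cos_cell_le hφ hω hn x β k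

theorem eN_nonneg {ω : ℝ → ℝ} (hω : IsModulus ω) (n : ℕ) : 0 ≤ eN n ω :=
  intervalIntegral.integral_nonneg (by positivity) fun t ht =>
    mul_nonneg (hω.2.2.2.2 _ (by have := ht.1; positivity))
      (sin_nonneg_of_nonneg_of_le_pi ht.1 (by linarith [ht.2, pi_pos]))

theorem eN_le_four_mul {ω : ℝ → ℝ} (hω : IsModulus ω) (n : ℕ) : eN n ω ≤ 4 * ω (1 / n) := by
  obtain ⟨hcont, hmono, hsub, -, -⟩ := hω
  have hπ : (0 : ℝ) ≤ π / 2 := by positivity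
  have hle_pi : eN n ω ≤ ω (π / n) := by
    calc eN n ω ≤ ∫ t in (0 : ℝ)..π / 2, ω (π / n) * sin t := by
          refine intervalIntegral.integral_mono_on hπ ?_
            ((continuous_const.mul continuous_sin).intervalIntegrable _ _) fun t ht => ?_
          · refine ContinuousOn.intervalIntegrable ?_
            rw [Set.uIcc_of_le hπ]
            exact (hcont.comp (f := fun t : ℝ => 2 * t / n) (by fun_prop)
              fun t (ht : t ∈ Set.Icc 0 (π / 2)) => show 0 ≤ 2 * t / n by
                have := ht.1; positivity).mul continuous_sin.continuousOn
          · refine mul_le_mul_of_nonneg_right (hmono ?_ ?_ ?_)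
              (sin_nonneg_of_nonneg_of_le_pi ht.1 (by linarith [ht.2, pi_pos]))
            · have := ht.1; simp only [Set.mem_Ici]; positivity
            · simp only [Set.mem_Ici]; positivity
            · exact div_le_div_of_nonneg_right (by linarith [ht.2]) (by positivity)
      _ = ω (π / n) := by simp [intervalIntegral.integral_const_mul, integral_sin]
  have hdouble : ∀ s : ℝ, 0 ≤ s → ω (2 * s) ≤ 2 * ω s := fun s hs => by
    simpa only [← two_mul] using hsub s s hs hs
  have h1 : (0 : ℝ) ≤ 1 / n := by positivity
  calc eN n ω ≤ ω (π / n) := hle_pi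
    _ ≤ ω (2 * (2 * (1 / n))) := hmono (by simp only [Set.mem_Ici]; positivity)
        (by simp only [Set.mem_Ici]; positivity)
        (by
          rw [← mul_assoc, mul_one_div]
          exact div_le_div_of_nonneg_right (by linarith [pi_le_four]) (by positivity))
    _ ≤ 4 * ω (1 / n) := by
        linarith [hdouble _ (by positivity : (0 : ℝ) ≤ 2 * (1 / n)), hdouble _ h1]

theorem In_le_of_forall_abs_integral_le {ψ ω : ℝ → ℝ} {β C : ℝ} {n : ℕ} (hC : 0 ≤ C)
    (h : ∀ φ ∈ HClassC ω, ∀ x, |∫ t in (0 : ℝ)..2 * π,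
      φ (x - t) * cos (n * t - β * π / 2) * PsiBar ψ β n t| ≤ C) :
    In ψ β ω n ≤ 2 / π * C := by
  refine Real.sSup_le ?_ (by positivity)
  rintro _ ⟨φ, hφ, rfl⟩
  exact mul_le_mul_of_nonneg_left (ciSup_le (h φ hφ)) (by positivity)

theorem two_div_pi_mul_tail_le {n μ p e w : ℝ} (hn : 1 ≤ n) (hμ : 2 < μ) (hp : 0 ≤ p)
    (he0 : 0 ≤ e) (he : e ≤ 4 * w) :
    2 / π * ((n + μ) * p / (μ / 2 - 1) * (e / n)) ≤ 24 * p * (1 / n + 1 / (μ - 2)) * w := by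
  have h2π : 2 / π ≤ 1 := by rw [div_le_one pi_pos]; linarith [two_le_pi]
  have hμ2 : 0 < μ - 2 := by linarith
  have hn0 : 0 < n := by linarith
  have hw : 0 ≤ w := by linarith
  have hX : 0 ≤ (n + μ) * p / (μ / 2 - 1) := div_nonneg (by positivity) (by linarith)
  calc 2 / π * ((n + μ) * p / (μ / 2 - 1) * (e / n))
      ≤ (n + μ) * p / (μ / 2 - 1) * (4 * w / n) := by
        refine (mul_le_of_le_one_left (by positivity) h2π).trans ?_
        gcongr
    _ = 8 * p * w * ((n + μ) / (n * (μ - 2))) := by field_simp; ring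
    _ ≤ 8 * p * w * (3 * (1 / n + 1 / (μ - 2))) := by
        gcongr
        rw [div_le_iff₀ (by positivity)]
        field_simp
        nlinarith
    _ = 24 * p * (1 / n + 1 / (μ - 2)) * w := by ring

/-- Lemma 1: `I_n(ψ,β,ω)_C ≤ (2/π) ψ(n) e_n(ω) + O(1) ψ(n+1)(1/n + 1/(μ(n)−2)) ω(1/n)`
whenever `μ(n) > 2`. -/
theorem statement11 :
    ∃ K : ℝ, 0 < K ∧ ∀ ψ η : ℝ → ℝ, IsMInfPlus ψ η → ∀ β : ℝ, ∀ ω : ℝ → ℝ,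
      IsModulus ω → ∀ n : ℕ,
      2 < (n : ℝ) / (η n - n) →
      In ψ β ω n ≤ (2 / π) * ψ n * eN n ω +
        K * ψ (n + 1) * (1 / n + 1 / ((n : ℝ) / (η n - n) - 2)) * ω (1 / n) := by
  refine ⟨24, by norm_num, fun ψ η hM β ω hω n hμ => ?_⟩
  have hn : 1 ≤ n := Nat.one_le_iff_ne_zero.2 fun h => by simp [h] at hμ; linarith
  have hn' : (1 : ℝ) ≤ n := Nat.one_le_cast.2 hn
  set μ := (n : ℝ) / (η n - n)
  have hgrid := hM.sum_psiN_xPt_le hn β (hM.sum_range_le hn' hμ)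
  have he := eN_nonneg hω n
  have hψn := (hM.1 n hn').le
  have hψ1 := (hM.1 (n + 1) (by linarith)).le
  have hB : 0 ≤ (n + μ) * ψ (n + 1) / (μ / 2 - 1) :=
    div_nonneg (mul_nonneg (by positivity) hψ1) (by linarith)
  calc In ψ β ω n ≤ 2 / π * ((n * ψ n + (n + μ) * ψ (n + 1) / (μ / 2 - 1)) * (eN n ω / n)) :=
        In_le_of_forall_abs_integral_le (by positivity) fun φ hφ x =>
          (abs_integral_le_sum_psiN_mul hφ hω.1 hn (hM.psiN_nonneg hn) β x).trans
            (mul_le_mul_of_nonneg_right hgrid (by positivity))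
    _ = 2 / π * ψ n * eN n ω + 2 / π * ((n + μ) * ψ (n + 1) / (μ / 2 - 1) * (eN n ω / n)) := by
        field_simp
    _ ≤ _ := add_le_add_right (two_div_pi_mul_tail_le hn' hμ hψ1 he (eN_le_four_mul hω n)) _
end
end

section
/- Let g:ℝ→ℝ be a 2π-periodic function of bounded variation, let n∈ℕ, a∈ℝ, and set t_k = a + kπ/n and x_k = t_k + π/(2n) for k∈ℤ. Let ḡ be the step function with ḡ(t)=g(x_k) for t∈[t_k,t_{k+1}). Then ∫_{t_0}^{t_0+2π}|g(t)−ḡ(t)|dt ≤ (π/n)·V(g;[t_0,t_0+2π]), where V(g;[t_0,t_0+2π]) is the total variation of g over one period. -/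
open Real MeasureTheory

noncomputable section

/-!
On each cell `[t_k, t_{k+1})` the step function is a value `g(x_k)` with `x_k` in the cell,
so `|g - ḡ|` is bounded there by the variation of `g` over the cell, and the integral over the
cell by `(π/n)` times that variation. The variation is additive over adjacent intervals, so
summing over the `2n` cells of one period gives the bound.
-/

open Set Finset
open scoped Interval

theorem eVariationOn.sum_range_Icc {α E : Type*} [LinearOrder α] [PseudoEMetricSpace E]
    (f : α → E) {T : ℕ → α} (hT : Monotone T) (m : ℕ) :
    ∑ k ∈ range m, eVariationOn f (Icc (T k) (T (k + 1))) = eVariationOn f (Icc (T 0) (T m)) := by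
  induction m with
  | zero => simp
  | succ m ih =>
    rw [sum_range_succ, ih]
    simpa using eVariationOn.Icc_add_Icc f (s := univ) (hT (Nat.zero_le m)) (hT m.le_succ)
      (mem_univ _)

theorem integral_abs_sub_le_mul_eVariationOn_of_eqOn_Ico {f h : ℝ → ℝ} {u v x : ℝ}
    (huv : u ≤ v) (hx : x ∈ Icc u v) (hf : BoundedVariationOn f (Icc u v))
    (hh : ∀ t ∈ Ico u v, h t = f x) :
    ∫ t in u..v, |f t - h t| ≤ (v - u) * (eVariationOn f (Icc u v)).toReal := by
  have hbound : ∀ᵐ t, t ∈ Ι u v → ‖|f t - h t|‖ ≤ (eVariationOn f (Icc u v)).toReal := by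
    filter_upwards [Measure.ae_ne volume v] with t htv ht
    rw [uIoc_of_le huv] at ht
    have htv' : t < v := lt_of_le_of_ne ht.2 htv
    rw [hh t ⟨ht.1.le, htv'⟩, norm_abs_eq_norm, ← dist_eq_norm]
    exact hf.dist_le ⟨ht.1.le, htv'.le⟩ hx
  calc ∫ t in u..v, |f t - h t|
      ≤ ‖∫ t in u..v, |f t - h t|‖ := le_abs_self _
    _ ≤ (eVariationOn f (Icc u v)).toReal * |v - u| :=
        intervalIntegral.norm_integral_le_of_norm_le_const_ae hbound
    _ = (v - u) * (eVariationOn f (Icc u v)).toReal := by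
        rw [abs_of_nonneg (sub_nonneg.2 huv), mul_comm]

theorem integral_abs_sub_le_mul_eVariationOn_of_partition {f h : ℝ → ℝ} {T x : ℕ → ℝ}
    {δ : ℝ} {m : ℕ} (hT : Monotone T) (hmesh : ∀ k < m, T (k + 1) - T k ≤ δ)
    (hx : ∀ k < m, x k ∈ Icc (T k) (T (k + 1))) (hf : BoundedVariationOn f (Icc (T 0) (T m)))
    (hh : ∀ k < m, ∀ t ∈ Ico (T k) (T (k + 1)), h t = f (x k)) :
    ∫ t in T 0..T m, |f t - h t| ≤ δ * (eVariationOn f (Icc (T 0) (T m))).toReal := by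
  have hcell : ∀ k < m, Icc (T k) (T (k + 1)) ⊆ Icc (T 0) (T m) := fun k hk =>
    Icc_subset_Icc (hT (Nat.zero_le k)) (hT hk)
  have hfin : ∀ k < m, eVariationOn f (Icc (T k) (T (k + 1))) ≠ ⊤ := fun k hk =>
    ne_top_of_le_ne_top hf (eVariationOn.mono f (hcell k hk))
  by_cases hint : IntervalIntegrable (fun t => |f t - h t|) volume (T 0) (T m)
  · have hint_cell : ∀ k < m, IntervalIntegrable (fun t => |f t - h t|) volume (T k) (T (k + 1)) :=
      fun k hk => hint.mono_set <| by
        rw [uIcc_of_le (hT k.le_succ), uIcc_of_le (hT (Nat.zero_le m))]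
        exact hcell k hk
    rw [← intervalIntegral.sum_integral_adjacent_intervals hint_cell,
      ← eVariationOn.sum_range_Icc f hT, ENNReal.toReal_sum fun k hk => hfin k (mem_range.1 hk),
      mul_sum]
    refine sum_le_sum fun k hk => ?_
    have hk := mem_range.1 hk
    calc ∫ t in T k..T (k + 1), |f t - h t|
        ≤ (T (k + 1) - T k) * (eVariationOn f (Icc (T k) (T (k + 1)))).toReal :=
          integral_abs_sub_le_mul_eVariationOn_of_eqOn_Ico (hT k.le_succ) (hx k hk) (hfin k hk)
            (hh k hk)
      _ ≤ δ * (eVariationOn f (Icc (T k) (T (k + 1)))).toReal := by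
          gcongr
          exact hmesh k hk
  · -- The integral is junk (`0`) here; `m ≠ 0` since every function is integrable on a point.
    have hm : 0 < m := Nat.pos_of_ne_zero fun hm => hint (by subst hm; exact .refl)
    have hδ : 0 ≤ δ := (sub_nonneg.2 (hT (Nat.zero_le 1))).trans (hmesh 0 hm)
    rw [intervalIntegral.integral_undef hint]
    positivity

theorem statement12_general (g : ℝ → ℝ) (n : ℕ) (hn : 0 < n) (a : ℝ)
    (hbv : BoundedVariationOn g (Set.Icc a (a + 2 * π)))
    (gbar : ℝ → ℝ)
    (hgbar : ∀ k : ℤ, ∀ t : ℝ, a + k * π / n ≤ t → t < a + (k + 1) * π / n →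
      gbar t = g (a + k * π / n + π / (2 * n))) :
    (∫ t in a..(a + 2 * π), |g t - gbar t|) ≤
      (π / n) * (eVariationOn g (Set.Icc a (a + 2 * π))).toReal := by
  have hn' : (0 : ℝ) < n := Nat.cast_pos.2 hn
  have hstep : ∀ k : ℕ, a + (k + 1 : ℕ) * π / n = a + k * π / n + π / n := fun k => by
    push_cast; ring
  have hhalf : π / (2 * n) ≤ π / n := div_le_div_of_nonneg_left pi_pos.le hn' (by linarith)
  have hmono : Monotone fun k : ℕ => a + k * π / n := fun i j hij => by
    dsimp only; gcongr
  have hend : a + 2 * (n : ℝ) * π / n = a + 2 * π := by field_simp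
  have key := integral_abs_sub_le_mul_eVariationOn_of_partition (f := g) (h := gbar) (m := 2 * n)
    (δ := π / n) (x := fun k => a + k * π / n + π / (2 * n)) hmono
    (fun k _ => by rw [hstep]; linarith)
    (fun k _ => ⟨le_add_of_nonneg_right (by positivity), by rw [hstep]; linarith⟩)
    (by simpa [hend] using hbv)
    (fun k _ t ht => hgbar k t (by exact_mod_cast ht.1) (by simpa [hstep] using ht.2))
  simpa [hend] using key

/-- If `g` is `2π`-periodic of bounded variation, `t_k = a + kπ/n`, `x_k = t_k + π/(2n)`,
and `ḡ` is the step function equal to `g(x_k)` on `[t_k, t_{k+1})`, then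
`∫_{t_0}^{t_0+2π} |g − ḡ| ≤ (π/n)·V(g; [t_0, t_0+2π])`. -/
theorem statement12 (g : ℝ → ℝ) (n : ℕ) (hn : 0 < n) (a : ℝ)
    (hper : Function.Periodic g (2 * π))
    (hbv : BoundedVariationOn g (Set.Icc a (a + 2 * π)))
    (gbar : ℝ → ℝ)
    (hgbar : ∀ k : ℤ, ∀ t : ℝ, a + k * π / n ≤ t → t < a + (k + 1) * π / n →
      gbar t = g (a + k * π / n + π / (2 * n))) :
    (∫ t in a..(a + 2 * π), |g t - gbar t|) ≤
      (π / n) * (eVariationOn g (Set.Icc a (a + 2 * π))).toReal :=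
  statement12_general g n hn a hbv gbar hgbar
end
end

section
/- Let ψ:ℕ→ℝ be a positive, nonincreasing, convex sequence (Δ²ψ(m)≥0 for all m) with lim_{m→∞}ψ(m)=0, lim_{k→∞}kψ(n+k)=0, and ∑_{k=1}^∞ψ(n+k)<∞ for a given n∈ℕ. Then ∑_{k=0}^{∞}(k+1)·|Δ²{kψ(n+k)}| ≤ 4∑_{k=1}^{∞}ψ(n+k), where Δ²{kψ(n+k)} denotes the second difference, in k, of the sequence α_k=kψ(n+k). -/
/-!
Write `b m = ψ (n + m)`. The second difference of `α_k = k b_k` is `k Δ²b_k - 2 Δb_{k+1}`, a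
difference of two nonnegative terms, so `|Δ²α_k| ≤ k Δ²b_k + 2 Δb_{k+1}`. Multiplying by `k + 1`
and summing by parts, the partial sums of the majorant equal `4 ∑_{m<N} b_{m+1}` plus the boundary
term `-N(N+1) b_N + N(N-3) b_{N+1}`, which is nonpositive because `b` is nonnegative and
nonincreasing.
-/

open Filter Finset

section SecondDifference

variable {b : ℕ → ℝ}

lemma abs_secondDiff_nat_mul_le (hdec : ∀ m, b (m + 1) ≤ b m)
    (hconv : ∀ m, 0 ≤ b m - 2 * b (m + 1) + b (m + 2)) (k : ℕ) :
    |(k : ℝ) * b k - 2 * ((k : ℝ) + 1) * b (k + 1) + ((k : ℝ) + 2) * b (k + 2)| ≤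
      k * (b k - 2 * b (k + 1) + b (k + 2)) + 2 * (b (k + 1) - b (k + 2)) := by
  have hsplit : (k : ℝ) * b k - 2 * ((k : ℝ) + 1) * b (k + 1) + ((k : ℝ) + 2) * b (k + 2) =
      k * (b k - 2 * b (k + 1) + b (k + 2)) - 2 * (b (k + 1) - b (k + 2)) := by ring
  have hconv_k : 0 ≤ (k : ℝ) * (b k - 2 * b (k + 1) + b (k + 2)) :=
    mul_nonneg k.cast_nonneg (hconv k)
  have hdec_k : 0 ≤ 2 * (b (k + 1) - b (k + 2)) := by linarith [hdec (k + 1)]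
  rw [hsplit, abs_le]
  constructor <;> linarith

lemma sum_range_succ_mul_secondDiff_add_diff (b : ℕ → ℝ) (N : ℕ) :
    ∑ k ∈ range N, ((k : ℝ) + 1) *
        (k * (b k - 2 * b (k + 1) + b (k + 2)) + 2 * (b (k + 1) - b (k + 2))) =
      4 * ∑ m ∈ range N, b (m + 1) - N * (N + 1) * b N + N * (N - 3) * b (N + 1) := by
  induction N with
  | zero => simp
  | succ N ih =>
    rw [sum_range_succ, sum_range_succ, ih]
    push_cast
    ring

lemma sum_range_succ_mul_abs_secondDiff_nat_mul_le (hb : ∀ m, 0 ≤ b m)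
    (hdec : ∀ m, b (m + 1) ≤ b m) (hconv : ∀ m, 0 ≤ b m - 2 * b (m + 1) + b (m + 2)) (N : ℕ) :
    ∑ k ∈ range N, ((k : ℝ) + 1) *
        |(k : ℝ) * b k - 2 * ((k : ℝ) + 1) * b (k + 1) + ((k : ℝ) + 2) * b (k + 2)| ≤
      4 * ∑ m ∈ range N, b (m + 1) := by
  have hboundary : (N : ℝ) * (N - 3) * b (N + 1) ≤ N * (N + 1) * b N :=
    calc (N : ℝ) * (N - 3) * b (N + 1) ≤ N * (N + 1) * b (N + 1) := by
          gcongr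
          · exact hb _
          · linarith
      _ ≤ N * (N + 1) * b N := by gcongr; exact hdec N
  calc _ ≤ ∑ k ∈ range N, ((k : ℝ) + 1) *
        (k * (b k - 2 * b (k + 1) + b (k + 2)) + 2 * (b (k + 1) - b (k + 2))) := by
        gcongr with k
        exact abs_secondDiff_nat_mul_le hdec hconv k
    _ ≤ _ := by
        rw [sum_range_succ_mul_secondDiff_add_diff]
        linarith

end SecondDifference

theorem statement15_general (ψ : ℕ → ℝ) (n : ℕ)
    (hpos : ∀ m, 0 < ψ m)
    (hdec : ∀ m, ψ (m + 1) ≤ ψ m)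
    (hconv : ∀ m, 0 ≤ ψ m - 2 * ψ (m + 1) + ψ (m + 2))
    (hsum : Summable (fun k : ℕ => ψ (n + k + 1))) :
    Summable (fun k : ℕ =>
        ((k : ℝ) + 1) * |(k : ℝ) * ψ (n + k) - 2 * ((k : ℝ) + 1) * ψ (n + k + 1) +
          ((k : ℝ) + 2) * ψ (n + k + 2)|) ∧
      (∑' k : ℕ,
          ((k : ℝ) + 1) * |(k : ℝ) * ψ (n + k) - 2 * ((k : ℝ) + 1) * ψ (n + k + 1) +
            ((k : ℝ) + 2) * ψ (n + k + 2)|) ≤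
        4 * ∑' k : ℕ, ψ (n + k + 1) := by
  have hpartial : ∀ N, ∑ k ∈ range N, ((k : ℝ) + 1) *
      |(k : ℝ) * ψ (n + k) - 2 * ((k : ℝ) + 1) * ψ (n + k + 1) + ((k : ℝ) + 2) * ψ (n + k + 2)| ≤
        4 * ∑' k : ℕ, ψ (n + k + 1) := fun N =>
    calc _ ≤ 4 * ∑ m ∈ range N, ψ (n + m + 1) :=
          sum_range_succ_mul_abs_secondDiff_nat_mul_le (b := fun m => ψ (n + m))
            (fun m => (hpos _).le) (fun m => hdec _) (fun m => hconv _) N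
      _ ≤ 4 * ∑' k : ℕ, ψ (n + k + 1) := by
          gcongr
          exact hsum.sum_le_tsum _ fun m _ => (hpos _).le
  have hsummable := summable_of_sum_range_le (fun k => by positivity) hpartial
  exact ⟨hsummable, hsummable.tsum_le_of_sum_range_le hpartial⟩

/-- Estimate (103): if `ψ : ℕ → ℝ` is positive, nonincreasing, convex, tends to zero,
`kψ(n+k) → 0`, and `∑_{k≥1} ψ(n+k) < ∞`, then the series
`∑_{k=0}^∞ (k+1)|Δ²{kψ(n+k)}|` converges and is at most `4∑_{k=1}^∞ ψ(n+k)`. -/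
theorem statement15 (ψ : ℕ → ℝ) (n : ℕ)
    (hpos : ∀ m, 0 < ψ m)
    (hdec : ∀ m, ψ (m + 1) ≤ ψ m)
    (hconv : ∀ m, 0 ≤ ψ m - 2 * ψ (m + 1) + ψ (m + 2))
    (hlim : Tendsto ψ atTop (nhds 0))
    (hklim : Tendsto (fun k : ℕ => (k : ℝ) * ψ (n + k)) atTop (nhds 0))
    (hsum : Summable (fun k : ℕ => ψ (n + k + 1))) :
    Summable (fun k : ℕ =>
        ((k : ℝ) + 1) * |(k : ℝ) * ψ (n + k) - 2 * ((k : ℝ) + 1) * ψ (n + k + 1) +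
          ((k : ℝ) + 2) * ψ (n + k + 2)|) ∧
      (∑' k : ℕ,
          ((k : ℝ) + 1) * |(k : ℝ) * ψ (n + k) - 2 * ((k : ℝ) + 1) * ψ (n + k + 1) +
            ((k : ℝ) + 2) * ψ (n + k + 2)|) ≤
        4 * ∑' k : ℕ, ψ (n + k + 1) :=
  statement15_general ψ n hpos hdec hconv hsum
end
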